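/- A value Φ on TU games satisfies efficiency, the k-nullifying null player property, and fairness if and only if Φ = Φ^{k-SED}. -/

import Mathlib

open Finset

/-- The Shapley value of player `i` in the TU game `v` on player set `Fin n`. -/
noncomputable def shapley (n : ℕ) (v : Finset (Fin n) → ℝ) (i : Fin n) : ℝ :=
  ∑ S ∈ (Finset.univ.erase i).powerset,
      ((S.card.factorial * (n - S.card - 1).factorial : ℝ) / n.factorial) *
        (v (insert i S) - v S)

/-- The `k`-SED value of player `i` in the TU game `v` on player set `Fin n`. -/
noncomputable def kSED (n k : ℕ) (v : Finset (Fin n) → ℝ) (i : Fin n) : ℝ :=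
  (∑ S ∈ ((Finset.univ.erase i).powerset.filter (fun S => S.card = k - 1)),
      (((n - k).factorial * (k - 1).factorial : ℝ) / n.factorial) * v (insert i S))
  + ∑ S ∈ ((Finset.univ.erase i).powerset.filter (fun S => k ≤ S.card)),
      (((n - S.card - 1).factorial * S.card.factorial : ℝ) / n.factorial) *
        (v (insert i S) - v S)

/-!
The `k`-SED value is the Shapley value of the truncated game `trunc k v`, which agrees with `v`
on coalitions of at least `k` players and vanishes on smaller ones. Efficiency, additivity and
symmetry of the Shapley value then give the three axioms for the `k`-SED value; a `k`-nullifying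
null player of `v` is a null player of `trunc k v`.

For uniqueness, let `D` be the difference of two values satisfying the axioms: it sums to zero,
vanishes at `k`-nullifying null players and is fair. Induct on the number of players that are not
`k`-nullifying null players of `v`. For two such players `i` and `j`, the game
`v' = swapDefect k i j v`, obtained from `v - v ∘ (i j)` by turning `i` into a `k`-nullifying
null player, keeps the null players of `v`, has `i` as an extra one, and `v - v'` is symmetric
in `i` and `j`; so fairness and the induction hypothesis give `D v i = D v j`. Thus
`D v` is zero at null players, constant at the others and sums to zero, hence vanishes.
-/

theorem eq_zero_of_sum_eq_zero_of_ne_zero_eq {ι : Type*} [Fintype ι] {f : ι → ℝ}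
    (h : ∀ i j, f i ≠ 0 → f j ≠ 0 → f i = f j) (hs : ∑ i, f i = 0) : f = 0 := by
  classical
  by_contra hf
  obtain ⟨i, hi⟩ := Function.ne_iff.1 hf
  have hsum : ∑ j, f j = #{j | f j ≠ 0} * f i := by
    rw [← sum_filter_of_ne fun j _ hj => hj,
      sum_congr rfl fun j hj => h j i (mem_filter.1 hj).2 hi, sum_const, nsmul_eq_mul]
  have hcard : (#{j | f j ≠ 0} : ℝ) ≠ 0 := Nat.cast_ne_zero.2 (card_ne_zero_of_mem (by simpa))
  exact mul_ne_zero hcard hi (hsum ▸ hs)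

namespace TUGame

variable {α : Type*}

def relabel (π : Equiv.Perm α) (v : Finset α → ℝ) : Finset α → ℝ :=
  fun S => v (S.map π.toEmbedding)

def trunc (k : ℕ) (v : Finset α → ℝ) : Finset α → ℝ :=
  fun S => if k ≤ #S then v S else 0

theorem trunc_add (k : ℕ) (v w : Finset α → ℝ) :
    trunc k (v + w) = trunc k v + trunc k w := by
  funext S
  by_cases h : k ≤ #S <;> simp [trunc, h]

theorem trunc_empty {k : ℕ} (hk : 0 < k) (v : Finset α → ℝ) : trunc k v ∅ = 0 :=
  if_neg (by simpa using hk.ne')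

theorem trunc_univ [Fintype α] {k : ℕ} (hk : k ≤ Fintype.card α) (v : Finset α → ℝ) :
    trunc k v univ = v univ :=
  if_pos (by rwa [card_univ])

theorem relabel_trunc (π : Equiv.Perm α) (k : ℕ) (v : Finset α → ℝ) :
    relabel π (trunc k v) = trunc k (relabel π v) := by
  funext S
  simp [relabel, trunc]

variable [DecidableEq α]

def nullify (k : ℕ) (i : α) (v : Finset α → ℝ) : Finset α → ℝ :=
  fun S => if i ∈ S then trunc k v (S.erase i) else v S

theorem nullify_of_notMem {k : ℕ} {i : α} {S : Finset α} (v : Finset α → ℝ) (h : i ∉ S) :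
    nullify k i v S = v S :=
  if_neg h

theorem nullify_insert {k : ℕ} {i : α} {S : Finset α} (v : Finset α → ℝ) (h : i ∉ S) :
    nullify k i v (insert i S) = trunc k v S := by
  simp [nullify, erase_insert h]

theorem nullify_empty (k : ℕ) (i : α) (v : Finset α → ℝ) : nullify k i v ∅ = v ∅ :=
  nullify_of_notMem v (notMem_empty i)

theorem nullify_nullify (k : ℕ) (i : α) (v : Finset α → ℝ) :
    nullify k i (nullify k i v) = nullify k i v := by
  funext S
  by_cases h : i ∈ S <;> simp [nullify, trunc, h]

theorem nullify_comm (k : ℕ) {a b : α} (hab : a ≠ b) (v : Finset α → ℝ) :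
    nullify k a (nullify k b v) = nullify k b (nullify k a v) := by
  funext S
  by_cases ha : a ∈ S <;> by_cases hb : b ∈ S <;>
    simp [nullify, trunc, ha, hb, hab, hab.symm, erase_right_comm, card_erase_of_mem]

theorem nullify_sub (k : ℕ) (i : α) (v w : Finset α → ℝ) :
    nullify k i (v - w) = nullify k i v - nullify k i w := by
  funext S
  simp only [nullify, trunc, Pi.sub_apply]
  split_ifs <;> simp

theorem nullify_relabel (k : ℕ) (π : Equiv.Perm α) (a : α) (v : Finset α → ℝ) :
    nullify k a (relabel π v) = relabel π (nullify k (π a) v) := by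
  funext S
  by_cases h : a ∈ S <;> simp [nullify, relabel, trunc, map_erase, h, card_erase_of_mem]

theorem mem_powerset_erase_univ [Fintype α] {i : α} {S : Finset α} :
    S ∈ (univ.erase i).powerset ↔ i ∉ S := by
  simp [subset_erase]

theorem mem_powerset_sdiff_pair [Fintype α] {i j : α} {S : Finset α} :
    S ∈ (univ \ {i, j}).powerset ↔ i ∉ S ∧ j ∉ S := by
  simp [subset_sdiff]

theorem nullify_eq_self_iff [Fintype α] {k : ℕ} {i : α} {v : Finset α → ℝ} :
    nullify k i v = v ↔
      (∀ S ∈ (univ.erase i).powerset, #S < k → v (insert i S) = 0) ∧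
      (∀ S ∈ (univ.erase i).powerset, k ≤ #S → v (insert i S) = v S) := by
  constructor
  · intro h
    have key : ∀ S, i ∉ S → v (insert i S) = trunc k v S := fun S hS => by
      rw [← nullify_insert v hS, h]
    refine ⟨fun S hS hk => ?_, fun S hS hk => ?_⟩
    · rw [key S (mem_powerset_erase_univ.1 hS), trunc, if_neg (by omega)]
    · rw [key S (mem_powerset_erase_univ.1 hS), trunc, if_pos hk]
  · rintro ⟨h₁, h₂⟩
    funext S
    by_cases hiS : i ∈ S
    · obtain ⟨T, hiT, rfl⟩ : ∃ T, i ∉ T ∧ insert i T = S :=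
        ⟨S.erase i, notMem_erase i S, insert_erase hiS⟩
      rw [nullify_insert v hiT, trunc]
      split_ifs with hk
      · exact (h₂ T (mem_powerset_erase_univ.2 hiT) hk).symm
      · exact (h₁ T (mem_powerset_erase_univ.2 hiT) (by omega)).symm
    · exact nullify_of_notMem v hiS

theorem trunc_insert_of_nullify_eq_self {k : ℕ} {i : α} {v : Finset α → ℝ}
    (h : nullify k i v = v) {S : Finset α} (hS : i ∉ S) :
    trunc k v (insert i S) = trunc k v S := by
  simp only [trunc, card_insert_of_notMem hS]
  rw [← congrFun h (insert i S), nullify_insert v hS, trunc]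
  split_ifs <;> first | rfl | omega

theorem map_swap_eq_self {i j : α} {S : Finset α} (h : i ∈ S ↔ j ∈ S) :
    S.map (Equiv.swap i j).toEmbedding = S := by
  ext x
  rw [mem_map_equiv, Equiv.symm_swap]
  rcases eq_or_ne x i with rfl | hxi
  · simpa using h.symm
  rcases eq_or_ne x j with rfl | hxj
  · simpa using h
  · rw [Equiv.swap_apply_of_ne_of_ne hxi hxj]

theorem map_swap_insert {i j : α} {S : Finset α} (hi : i ∉ S) (hj : j ∉ S) :
    (insert i S).map (Equiv.swap i j).toEmbedding = insert j S := by
  rw [map_insert, map_swap_eq_self (iff_of_false hi hj)]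
  simp

theorem relabel_swap_eq_self [Fintype α] {i j : α} {w : Finset α → ℝ}
    (h : ∀ S ∈ (univ \ {i, j}).powerset, w (insert i S) = w (insert j S)) :
    relabel (Equiv.swap i j) w = w := by
  funext S
  by_cases hS : i ∈ S ↔ j ∈ S
  · rw [relabel, map_swap_eq_self hS]
  by_cases hi : i ∈ S
  · have hjT : j ∉ S.erase i := fun hj => hS (iff_of_true hi (mem_of_mem_erase hj))
    rw [← insert_erase hi, relabel, map_swap_insert (notMem_erase i S) hjT]
    exact (h _ (mem_powerset_sdiff_pair.2 ⟨notMem_erase i S, hjT⟩)).symm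
  · have hj : j ∈ S := by tauto
    have hiT : i ∉ S.erase j := fun hi' => hi (mem_of_mem_erase hi')
    rw [← insert_erase hj, relabel, Equiv.swap_comm, map_swap_insert (notMem_erase j S) hiT]
    exact h _ (mem_powerset_sdiff_pair.2 ⟨hiT, notMem_erase j S⟩)

def swapDefect (k : ℕ) (i j : α) (v : Finset α → ℝ) : Finset α → ℝ :=
  nullify k i (v - relabel (Equiv.swap i j) v)

theorem swapDefect_empty (k : ℕ) (i j : α) (v : Finset α → ℝ) :
    swapDefect k i j v ∅ = 0 := by
  simp [swapDefect, nullify_empty, relabel]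

theorem nullify_swapDefect_self (k : ℕ) (i j : α) (v : Finset α → ℝ) :
    nullify k i (swapDefect k i j v) = swapDefect k i j v :=
  nullify_nullify k i _

theorem nullify_swapDefect {k : ℕ} {a i j : α} (hai : a ≠ i) (haj : a ≠ j)
    {v : Finset α → ℝ} (h : nullify k a v = v) :
    nullify k a (swapDefect k i j v) = swapDefect k i j v := by
  rw [swapDefect, nullify_comm k hai, nullify_sub, nullify_relabel,
    Equiv.swap_apply_of_ne_of_ne hai haj, h]

theorem sub_swapDefect_symm [Fintype α] (k : ℕ) {i j : α} (hij : i ≠ j)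
    (v : Finset α → ℝ) :
    ∀ S ∈ (univ \ {i, j}).powerset,
      (v - swapDefect k i j v) (insert i S) = (v - swapDefect k i j v) (insert j S) := by
  intro S hS
  obtain ⟨hi, hj⟩ := mem_powerset_sdiff_pair.1 hS
  have hjS : i ∉ insert j S := by simp [hij, hi]
  rw [Pi.sub_apply, Pi.sub_apply, swapDefect, nullify_insert _ hi, nullify_of_notMem _ hjS]
  simp only [trunc, relabel, Pi.sub_apply, map_swap_eq_self (iff_of_false hi hj), sub_self,
    ite_self]
  rw [Equiv.swap_comm, map_swap_insert hj hi]
  ring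

theorem eq_zero_of_efficient_null_fair [Fintype α] (k : ℕ)
    (D : (Finset α → ℝ) → α → ℝ)
    (hsum : ∀ v, v ∅ = 0 → ∑ i, D v i = 0)
    (hnull : ∀ v, v ∅ = 0 → ∀ i, nullify k i v = v → D v i = 0)
    (hfair : ∀ v w : Finset α → ℝ, v ∅ = 0 → w ∅ = 0 → ∀ i j : α,
      (∀ S ∈ (univ \ {i, j}).powerset, w (insert i S) = w (insert j S)) →
      D (v + w) i - D v i = D (v + w) j - D v j)
    (v : Finset α → ℝ) (hv : v ∅ = 0) : D v = 0 := by
  classical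
  induction hm : #{a | nullify k a v ≠ v} using Nat.strong_induction_on generalizing v with
  | _ m ih =>
  refine eq_zero_of_sum_eq_zero_of_ne_zero_eq (fun i j hi hj => ?_) (hsum v hv)
  obtain rfl | hij := eq_or_ne i j
  · rfl
  have hi' : nullify k i v ≠ v := fun h => hi (hnull v hv i h)
  have hj' : nullify k j v ≠ v := fun h => hj (hnull v hv j h)
  set v' := swapDefect k i j v
  have hlt : #{a | nullify k a v' ≠ v'} < m := by
    refine hm ▸ card_lt_card ((ssubset_iff_of_subset fun a => ?_).2
      ⟨i, by simpa using hi', by simpa [v'] using nullify_swapDefect_self k i j v⟩)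
    simp only [mem_filter, mem_univ, true_and]
    refine mt fun ha => nullify_swapDefect ?_ ?_ ha
    · rintro rfl; exact hi' ha
    · rintro rfl; exact hj' ha
  have hv' : D v' = 0 := ih _ hlt v' (swapDefect_empty k i j v) rfl
  have hw : (v - v') ∅ = 0 := by simp [hv, v', swapDefect_empty]
  simpa [hv'] using hfair v' (v - v') (swapDefect_empty k i j v) hw i j
    (sub_swapDefect_symm k hij v)

theorem sum_sum_powerset_erase_univ [Fintype α] (f : Finset α → ℝ) :
    ∑ i, ∑ S ∈ (univ.erase i).powerset, f S = ∑ S, (#Sᶜ : ℝ) * f S := by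
  rw [sum_comm' (t' := univ) (s' := fun S => Sᶜ) fun i S => by simp [subset_erase]]
  simp_rw [sum_const, nsmul_eq_mul]

theorem sum_sum_powerset_erase_univ_insert [Fintype α] (f : Finset α → ℝ) :
    ∑ i, ∑ S ∈ (univ.erase i).powerset, f (insert i S) = ∑ S, (#S : ℝ) * f S := by
  have h : ∀ i, ∑ S ∈ (univ.erase i).powerset, f (insert i S) =
      ∑ S, f S - ∑ S ∈ (univ.erase i).powerset, f S := fun i => by
    rw [eq_sub_iff_add_eq', ← sum_powerset_insert (notMem_erase i univ),
      insert_erase (mem_univ i), powerset_univ]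
  simp_rw [h, sum_sub_distrib, sum_sum_powerset_erase_univ, sum_const, card_univ, nsmul_eq_mul,
    mul_sum, ← sum_sub_distrib, ← sub_mul, card_compl]
  refine sum_congr rfl fun S _ => ?_
  rw [Nat.cast_sub (card_le_univ S)]
  ring

end TUGame

open TUGame

noncomputable def shapleyWeight (n s : ℕ) : ℝ :=
  (s.factorial * (n - s - 1).factorial : ℝ) / n.factorial

theorem shapley_eq_sum_shapleyWeight (n : ℕ) (v : Finset (Fin n) → ℝ) (i : Fin n) :
    shapley n v i =
      ∑ S ∈ (univ.erase i).powerset, shapleyWeight n #S * (v (insert i S) - v S) :=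
  rfl

theorem card_mul_shapleyWeight_pred {n t : ℕ} (ht : 0 < t) (htn : t < n) :
    (t : ℝ) * shapleyWeight n (t - 1) = ((n - t : ℕ) : ℝ) * shapleyWeight n t := by
  have h₁ : (t : ℝ) * (t - 1).factorial = t.factorial := by
    exact_mod_cast Nat.mul_factorial_pred ht.ne'
  have h₂ : ((n - t : ℕ) : ℝ) * (n - t - 1).factorial = (n - t).factorial := by
    exact_mod_cast Nat.mul_factorial_pred (Nat.sub_ne_zero_of_lt htn)
  rw [shapleyWeight, shapleyWeight, show n - (t - 1) - 1 = n - t by omega, ← h₁, ← h₂]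
  ring

theorem mul_shapleyWeight_pred_self {n : ℕ} (hn : 0 < n) :
    (n : ℝ) * shapleyWeight n (n - 1) = 1 := by
  have h : (n : ℝ) * (n - 1).factorial = n.factorial := by
    exact_mod_cast Nat.mul_factorial_pred hn.ne'
  rw [shapleyWeight, show n - (n - 1) - 1 = 0 by omega, Nat.factorial_zero, Nat.cast_one, mul_one,
    mul_div_assoc', h, div_self (Nat.cast_ne_zero.2 n.factorial_ne_zero)]

theorem sum_shapley {n : ℕ} (hn : 0 < n) {v : Finset (Fin n) → ℝ} (hv : v ∅ = 0) :
    ∑ i, shapley n v i = v univ := by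
  have hsplit : ∀ i, shapley n v i =
      ∑ S ∈ (univ.erase i).powerset, shapleyWeight n (#(insert i S) - 1) * v (insert i S) -
        ∑ S ∈ (univ.erase i).powerset, shapleyWeight n #S * v S := fun i => by
    rw [shapley_eq_sum_shapleyWeight, ← sum_sub_distrib]
    refine sum_congr rfl fun S hS => ?_
    rw [card_insert_of_notMem (mem_powerset_erase_univ.1 hS), Nat.add_sub_cancel]
    ring
  simp_rw [hsplit, sum_sub_distrib,
    sum_sum_powerset_erase_univ_insert (fun T => shapleyWeight n (#T - 1) * v T),
    sum_sum_powerset_erase_univ, ← sum_sub_distrib, card_compl, Fintype.card_fin]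
  rw [sum_eq_single univ]
  · rw [card_univ, Fintype.card_fin, Nat.sub_self, Nat.cast_zero, zero_mul, sub_zero,
      ← mul_assoc, mul_shapleyWeight_pred_self hn, one_mul]
  · intro T _ hT
    obtain rfl | hT₀ := eq_or_ne T ∅
    · simp [hv]
    have ht : 0 < #T := card_pos.2 (nonempty_iff_ne_empty.2 hT₀)
    have htn : #T < n := by simpa using (card_lt_iff_ne_univ T).2 hT
    rw [← mul_assoc, ← mul_assoc, card_mul_shapleyWeight_pred ht htn, sub_self]
  · simp

theorem shapley_add (n : ℕ) (v w : Finset (Fin n) → ℝ) (i : Fin n) :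
    shapley n (v + w) i = shapley n v i + shapley n w i := by
  simp only [shapley_eq_sum_shapleyWeight, ← sum_add_distrib, Pi.add_apply]
  exact sum_congr rfl fun _ _ => by ring

theorem shapley_eq_zero_of_null {n : ℕ} {v : Finset (Fin n) → ℝ} {i : Fin n}
    (h : ∀ S, i ∉ S → v (insert i S) = v S) : shapley n v i = 0 :=
  sum_eq_zero fun S hS => by rw [h S (mem_powerset_erase_univ.1 hS), sub_self, mul_zero]

theorem shapley_relabel (n : ℕ) (π : Equiv.Perm (Fin n)) (v : Finset (Fin n) → ℝ)
    (i : Fin n) :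
    shapley n (relabel π v) i = shapley n v (π i) := by
  refine sum_equiv π.finsetCongr (fun S => ?_) (fun S _ => ?_)
  · rw [mem_powerset_erase_univ, mem_powerset_erase_univ]
    simp
  · simp [relabel, map_insert]

theorem shapley_eq_of_relabel_swap_eq {n : ℕ} {w : Finset (Fin n) → ℝ} {i j : Fin n}
    (h : relabel (Equiv.swap i j) w = w) : shapley n w i = shapley n w j := by
  rw [← h, shapley_relabel, Equiv.swap_apply_left, h]

theorem kSED_eq_shapley_trunc {n k : ℕ} (hk : 0 < k) (v : Finset (Fin n) → ℝ) (i : Fin n) :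
    kSED n k v i = shapley n (trunc k v) i := by
  rw [kSED, sum_filter, sum_filter, ← sum_add_distrib, shapley_eq_sum_shapleyWeight]
  refine sum_congr rfl fun S hS => ?_
  simp only [trunc, card_insert_of_notMem (mem_powerset_erase_univ.1 hS), shapleyWeight]
  split_ifs with h₁ <;> try omega
  · rw [show n - k = n - #S - 1 by omega, ← h₁]
    ring
  all_goals ring

theorem sum_kSED {n k : ℕ} (hk : 0 < k) (hkn : k ≤ n) (v : Finset (Fin n) → ℝ) :
    ∑ i, kSED n k v i = v univ := by
  simp_rw [kSED_eq_shapley_trunc hk]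
  rw [sum_shapley (hk.trans_le hkn) (trunc_empty hk v), trunc_univ (by simpa using hkn)]

theorem kSED_eq_zero_of_nullify_eq_self {n k : ℕ} (hk : 0 < k) {v : Finset (Fin n) → ℝ}
    {i : Fin n} (h : nullify k i v = v) : kSED n k v i = 0 := by
  rw [kSED_eq_shapley_trunc hk]
  exact shapley_eq_zero_of_null fun S hS => trunc_insert_of_nullify_eq_self h hS

theorem kSED_add_sub_eq_of_symm {n k : ℕ} (hk : 0 < k) (v : Finset (Fin n) → ℝ)
    {w : Finset (Fin n) → ℝ} {i j : Fin n}
    (h : ∀ S ∈ (univ \ {i, j}).powerset, w (insert i S) = w (insert j S)) :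
    kSED n k (v + w) i - kSED n k v i = kSED n k (v + w) j - kSED n k v j := by
  simp only [kSED_eq_shapley_trunc hk, trunc_add, shapley_add, add_sub_cancel_left]
  exact shapley_eq_of_relabel_swap_eq (by rw [relabel_trunc, relabel_swap_eq_self h])

theorem kSED_characterization_fairness_general (n k : ℕ) (hk : 1 ≤ k) (hkn : k ≤ n)
    (Φ : (Finset (Fin n) → ℝ) → Fin n → ℝ) :
    ((∀ v : Finset (Fin n) → ℝ, v ∅ = 0 → ∑ i, Φ v i = v Finset.univ) ∧
     (∀ v : Finset (Fin n) → ℝ, v ∅ = 0 → ∀ i : Fin n,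
        (∀ S ∈ (Finset.univ.erase i).powerset, S.card < k → v (insert i S) = 0) →
        (∀ S ∈ (Finset.univ.erase i).powerset, k ≤ S.card → v (insert i S) = v S) →
        Φ v i = 0) ∧
     (∀ v w : Finset (Fin n) → ℝ, v ∅ = 0 → w ∅ = 0 → ∀ i j : Fin n,
        (∀ S ∈ (Finset.univ \ {i, j} : Finset (Fin n)).powerset,
          w (insert i S) = w (insert j S)) →
        Φ (v + w) i - Φ v i = Φ (v + w) j - Φ v j))
    ↔ (∀ v : Finset (Fin n) → ℝ, v ∅ = 0 → ∀ i : Fin n, Φ v i = kSED n k v i) := by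
  constructor
  · rintro ⟨hEff, hNull, hFair⟩ v hv i
    refine sub_eq_zero.1 <| congrFun (eq_zero_of_efficient_null_fair k
      (fun v i => Φ v i - kSED n k v i) (fun v hv => ?_) (fun v hv i hi => ?_)
      (fun v w hv hw i j hsym => ?_) v hv) i
    · rw [sum_sub_distrib, hEff v hv, sum_kSED hk hkn, sub_self]
    · rw [hNull v hv i (nullify_eq_self_iff.1 hi).1 (nullify_eq_self_iff.1 hi).2,
        kSED_eq_zero_of_nullify_eq_self hk hi, sub_self]
    · linarith [hFair v w hv hw i j hsym, kSED_add_sub_eq_of_symm hk v hsym]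
  · intro hΦ
    refine ⟨fun v hv => ?_, fun v hv i h₁ h₂ => ?_, fun v w hv hw i j hsym => ?_⟩
    · simp_rw [hΦ v hv]
      exact sum_kSED hk hkn v
    · rw [hΦ v hv]
      exact kSED_eq_zero_of_nullify_eq_self hk (nullify_eq_self_iff.2 ⟨h₁, h₂⟩)
    · have hvw : (v + w) ∅ = 0 := by simp [hv, hw]
      rw [hΦ v hv, hΦ v hv, hΦ _ hvw, hΦ _ hvw]
      exact kSED_add_sub_eq_of_symm hk v hsym

/-- a value satisfies efficiency, the `k`-nullifying null player
property and fairness iff it is the `k`-SED value. -/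
theorem kSED_characterization_fairness (n k : ℕ) (hn : 1 ≤ n) (hk : 1 ≤ k) (hkn : k ≤ n)
    (Φ : (Finset (Fin n) → ℝ) → Fin n → ℝ) :
    ((∀ v : Finset (Fin n) → ℝ, v ∅ = 0 → ∑ i, Φ v i = v Finset.univ) ∧
     (∀ v : Finset (Fin n) → ℝ, v ∅ = 0 → ∀ i : Fin n,
        (∀ S ∈ (Finset.univ.erase i).powerset, S.card < k → v (insert i S) = 0) →
        (∀ S ∈ (Finset.univ.erase i).powerset, k ≤ S.card → v (insert i S) = v S) →
        Φ v i = 0) ∧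
     (∀ v w : Finset (Fin n) → ℝ, v ∅ = 0 → w ∅ = 0 → ∀ i j : Fin n,
        (∀ S ∈ (Finset.univ \ {i, j} : Finset (Fin n)).powerset,
          w (insert i S) = w (insert j S)) →
        Φ (v + w) i - Φ v i = Φ (v + w) j - Φ v j))
    ↔ (∀ v : Finset (Fin n) → ℝ, v ∅ = 0 → ∀ i : Fin n, Φ v i = kSED n k v i) :=
  kSED_characterization_fairness_general n k hk hkn Φ
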